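/- arXiv:2202.07584 — 4 statements merged into one kernel-verified Lean document; each statement's English description precedes it below -/
import Mathlib

section
/- Let (T,I,N) be a residual triplet with T left-continuous, R a T-preorder on a finite set U, and u,v ∈ U. The fuzzy granules R⁺_{λ₁}(u)(w)=T(R(w,u),λ₁) and R⁻_{λ₂}(v)(w)=T(R(v,w),λ₂) are T-disjoint (i.e., T(R⁺_{λ₁}(u)(w), R⁻_{λ₂}(v)(w))=0 for all w ∈ U) if and only if T(λ₁,λ₂) ≤ N(R(v,u)). -/
def tnormCommMonoid (T : ℝ → ℝ → ℝ)
    (hTmem : ∀ x ∈ Set.Icc (0:ℝ) 1, ∀ y ∈ Set.Icc (0:ℝ) 1, T x y ∈ Set.Icc (0:ℝ) 1)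
    (hTcomm : ∀ x ∈ Set.Icc (0:ℝ) 1, ∀ y ∈ Set.Icc (0:ℝ) 1, T x y = T y x)
    (hTassoc : ∀ x ∈ Set.Icc (0:ℝ) 1, ∀ y ∈ Set.Icc (0:ℝ) 1, ∀ z ∈ Set.Icc (0:ℝ) 1,
      T (T x y) z = T x (T y z))
    (hTone : ∀ x ∈ Set.Icc (0:ℝ) 1, T x 1 = x) :
    CommSemigroup (Set.Icc (0:ℝ) 1) where
  mul a b := ⟨T a b, hTmem a a.2 b b.2⟩
  mul_assoc a b c := Subtype.ext (hTassoc a a.2 b b.2 c c.2)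
  mul_comm a b := Subtype.ext (hTcomm a a.2 b b.2)

lemma cm4 {M : Type*} [CommSemigroup M] (A B C D : M) :
    (A*B)*(C*D) = (B*D)*(C*A) := by
  calc (A*B)*(C*D) = (B*A)*(D*C) := by rw [mul_comm A B, mul_comm C D]
    _ = (B*D)*(A*C) := mul_mul_mul_comm B A D C
    _ = (B*D)*(C*A) := by rw [mul_comm A C]

lemma cm3 {M : Type*} [CommSemigroup M] (A B C : M) : (A*B)*C = A*(C*B) := by
  rw [mul_assoc, mul_comm B C]

lemma tnorm_rearr4 (T : ℝ → ℝ → ℝ)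
    (hTmem : ∀ x ∈ Set.Icc (0:ℝ) 1, ∀ y ∈ Set.Icc (0:ℝ) 1, T x y ∈ Set.Icc (0:ℝ) 1)
    (hTcomm : ∀ x ∈ Set.Icc (0:ℝ) 1, ∀ y ∈ Set.Icc (0:ℝ) 1, T x y = T y x)
    (hTassoc : ∀ x ∈ Set.Icc (0:ℝ) 1, ∀ y ∈ Set.Icc (0:ℝ) 1, ∀ z ∈ Set.Icc (0:ℝ) 1,
      T (T x y) z = T x (T y z))
    (hTone : ∀ x ∈ Set.Icc (0:ℝ) 1, T x 1 = x)
    {a b c d : ℝ} (ha : a ∈ Set.Icc (0:ℝ) 1) (hb : b ∈ Set.Icc (0:ℝ) 1)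
    (hc : c ∈ Set.Icc (0:ℝ) 1) (hd : d ∈ Set.Icc (0:ℝ) 1) :
    T (T a b) (T c d) = T (T b d) (T c a) := by
  exact congrArg Subtype.val
    (@cm4 _ (tnormCommMonoid T hTmem hTcomm hTassoc hTone) ⟨a,ha⟩ ⟨b,hb⟩ ⟨c,hc⟩ ⟨d,hd⟩)

lemma tnorm_rearr3 (T : ℝ → ℝ → ℝ)
    (hTmem : ∀ x ∈ Set.Icc (0:ℝ) 1, ∀ y ∈ Set.Icc (0:ℝ) 1, T x y ∈ Set.Icc (0:ℝ) 1)
    (hTcomm : ∀ x ∈ Set.Icc (0:ℝ) 1, ∀ y ∈ Set.Icc (0:ℝ) 1, T x y = T y x)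
    (hTassoc : ∀ x ∈ Set.Icc (0:ℝ) 1, ∀ y ∈ Set.Icc (0:ℝ) 1, ∀ z ∈ Set.Icc (0:ℝ) 1,
      T (T x y) z = T x (T y z))
    (hTone : ∀ x ∈ Set.Icc (0:ℝ) 1, T x 1 = x)
    {a b c : ℝ} (ha : a ∈ Set.Icc (0:ℝ) 1) (hb : b ∈ Set.Icc (0:ℝ) 1)
    (hc : c ∈ Set.Icc (0:ℝ) 1) :
    T (T a b) c = T a (T c b) := by
  exact congrArg Subtype.val
    (@cm3 _ (tnormCommMonoid T hTmem hTcomm hTassoc hTone) ⟨a,ha⟩ ⟨b,hb⟩ ⟨c,hc⟩)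

/-- The granules R⁺_{λ₁}(u) and R⁻_{λ₂}(v) are T-disjoint iff T(λ₁,λ₂) ≤ N(R(v,u)). -/
theorem stmt_12 (U : Type*) [Finite U]
    (T I : ℝ → ℝ → ℝ) (Nf : ℝ → ℝ)
    (hTmem : ∀ x ∈ Set.Icc (0:ℝ) 1, ∀ y ∈ Set.Icc (0:ℝ) 1, T x y ∈ Set.Icc (0:ℝ) 1)
    (hTcomm : ∀ x ∈ Set.Icc (0:ℝ) 1, ∀ y ∈ Set.Icc (0:ℝ) 1, T x y = T y x)
    (hTassoc : ∀ x ∈ Set.Icc (0:ℝ) 1, ∀ y ∈ Set.Icc (0:ℝ) 1, ∀ z ∈ Set.Icc (0:ℝ) 1,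
      T (T x y) z = T x (T y z))
    (hTmono : ∀ x ∈ Set.Icc (0:ℝ) 1, ∀ y ∈ Set.Icc (0:ℝ) 1, ∀ z ∈ Set.Icc (0:ℝ) 1,
      y ≤ z → T x y ≤ T x z)
    (hTone : ∀ x ∈ Set.Icc (0:ℝ) 1, T x 1 = x)
    (hImem : ∀ x ∈ Set.Icc (0:ℝ) 1, ∀ y ∈ Set.Icc (0:ℝ) 1, I x y ∈ Set.Icc (0:ℝ) 1)
    (hres : ∀ x ∈ Set.Icc (0:ℝ) 1, ∀ y ∈ Set.Icc (0:ℝ) 1, ∀ z ∈ Set.Icc (0:ℝ) 1,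
      (T x y ≤ z ↔ x ≤ I y z))
    (hN : ∀ x ∈ Set.Icc (0:ℝ) 1, Nf x = I x 0)
    (R : U → U → ℝ)
    (hRmem : ∀ u v : U, R u v ∈ Set.Icc (0:ℝ) 1)
    (hRrefl : ∀ u : U, R u u = 1)
    (hRtrans : ∀ u v w : U, T (R u v) (R v w) ≤ R u w)
    (u v : U) (lam1 lam2 : ℝ)
    (hlam1 : lam1 ∈ Set.Icc (0:ℝ) 1) (hlam2 : lam2 ∈ Set.Icc (0:ℝ) 1) :
    (∀ w : U, T (T (R w u) lam1) (T (R v w) lam2) = 0) ↔ T lam1 lam2 ≤ Nf (R v u) := by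
  have h01 : (0:ℝ) ∈ Set.Icc (0:ℝ) 1 := by norm_num
  have hRvu := hRmem v u
  have hll : T lam1 lam2 ∈ Set.Icc (0:ℝ) 1 := hTmem _ hlam1 _ hlam2
  constructor
  · intro h
    have h' := h u
    rw [hRrefl u, hTcomm 1 (by norm_num) lam1 hlam1, hTone lam1 hlam1] at h'
    -- h' : T lam1 (T (R v u) lam2) = 0
    have key : T (T lam1 lam2) (R v u) = 0 := by
      rw [tnorm_rearr3 T hTmem hTcomm hTassoc hTone hlam1 hlam2 hRvu]
      exact h'
    rw [hN _ hRvu]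
    exact (hres _ hll _ hRvu _ h01).mp key.le
  · intro h w
    have ha := hRmem w u
    have hb := hRmem v w
    have hba : T (R v w) (R w u) ∈ Set.Icc (0:ℝ) 1 := hTmem _ hb _ ha
    have h2 : T (T lam1 lam2) (R v u) ≤ 0 := by
      rw [hN _ hRvu] at h
      exact (hres _ hll _ hRvu _ h01).mpr h
    have h3 : T (T lam1 lam2) (T (R v w) (R w u)) ≤ T (T lam1 lam2) (R v u) :=
      hTmono _ hll _ hba _ hRvu (hRtrans v w u)
    have h4 : T (T (R w u) lam1) (T (R v w) lam2)
        = T (T lam1 lam2) (T (R v w) (R w u)) :=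
      tnorm_rearr4 T hTmem hTcomm hTassoc hTone ha hlam1 hb hlam2
    have h5 : (0:ℝ) ≤ T (T (R w u) lam1) (T (R v w) lam2) :=
      (hTmem _ (hTmem _ ha _ hlam1) _ (hTmem _ hb _ hlam2)).1
    linarith
end

section
/- If a fuzzy set A on U is granularly representable with respect to a T-preorder relation R (i.e., T(R(v,u),A(u)) ≤ A(v) for all u,v ∈ U), and (T,I,N) is an IMTL triplet, then coA defined by coA(u)=N(A(u)) is granularly representable with respect to the inverse relation R⁻¹(u,v)=R(v,u), i.e., T(R(u,v), N(A(u))) ≤ N(A(v)) for all u,v ∈ U. -/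
/-- If A is granularly representable w.r.t. a T-preorder R (IMTL triplet),
    then coA is granularly representable w.r.t. R⁻¹. -/
theorem stmt_14 (U : Type*)
    (T I : ℝ → ℝ → ℝ) (Nf : ℝ → ℝ)
    (hTmem : ∀ x ∈ Set.Icc (0:ℝ) 1, ∀ y ∈ Set.Icc (0:ℝ) 1, T x y ∈ Set.Icc (0:ℝ) 1)
    (hTcomm : ∀ x ∈ Set.Icc (0:ℝ) 1, ∀ y ∈ Set.Icc (0:ℝ) 1, T x y = T y x)
    (hTassoc : ∀ x ∈ Set.Icc (0:ℝ) 1, ∀ y ∈ Set.Icc (0:ℝ) 1, ∀ z ∈ Set.Icc (0:ℝ) 1,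
      T (T x y) z = T x (T y z))
    (hTmono : ∀ x ∈ Set.Icc (0:ℝ) 1, ∀ y ∈ Set.Icc (0:ℝ) 1, ∀ z ∈ Set.Icc (0:ℝ) 1,
      y ≤ z → T x y ≤ T x z)
    (hTone : ∀ x ∈ Set.Icc (0:ℝ) 1, T x 1 = x)
    (hImem : ∀ x ∈ Set.Icc (0:ℝ) 1, ∀ y ∈ Set.Icc (0:ℝ) 1, I x y ∈ Set.Icc (0:ℝ) 1)
    (hres : ∀ x ∈ Set.Icc (0:ℝ) 1, ∀ y ∈ Set.Icc (0:ℝ) 1, ∀ z ∈ Set.Icc (0:ℝ) 1,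
      (T x y ≤ z ↔ x ≤ I y z))
    (hN : ∀ x ∈ Set.Icc (0:ℝ) 1, Nf x = I x 0)
    (hinv : ∀ x ∈ Set.Icc (0:ℝ) 1, Nf (Nf x) = x)
    (R : U → U → ℝ)
    (hRmem : ∀ u v : U, R u v ∈ Set.Icc (0:ℝ) 1)
    (hRrefl : ∀ u : U, R u u = 1)
    (hRtrans : ∀ u v w : U, T (R u v) (R v w) ≤ R u w)
    (A : U → ℝ) (hAmem : ∀ u : U, A u ∈ Set.Icc (0:ℝ) 1)
    (hGR : ∀ u v : U, T (R v u) (A u) ≤ A v) :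
    ∀ u v : U, T (R u v) (Nf (A u)) ≤ Nf (A v) := by
  have h01 : (0:ℝ) ∈ Set.Icc (0:ℝ) 1 := ⟨le_refl 0, zero_le_one⟩
  intro u v
  have ha := hRmem u v
  have hAu := hAmem u
  have hAv := hAmem v
  have hNAu : Nf (A u) = I (A u) 0 := hN (A u) hAu
  have hNm : Nf (A u) ∈ Set.Icc (0:ℝ) 1 := by
    rw [hNAu]; exact hImem (A u) hAu 0 h01
  have hx : T (R u v) (Nf (A u)) ∈ Set.Icc (0:ℝ) 1 := hTmem _ ha _ hNm
  rw [hN (A v) hAv]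
  apply (hres _ hx _ hAv _ h01).mp
  have heq : T (T (R u v) (Nf (A u))) (A v) = T (Nf (A u)) (T (R u v) (A v)) := by
    rw [hTcomm _ ha _ hNm, hTassoc _ hNm _ ha _ hAv]
  rw [heq]
  have h1 : T (R u v) (A v) ≤ A u := hGR v u
  have h2 : T (Nf (A u)) (T (R u v) (A v)) ≤ T (Nf (A u)) (A u) :=
    hTmono _ hNm _ (hTmem _ ha _ hAv) _ hAu h1
  have h3 : T (Nf (A u)) (A u) ≤ 0 :=
    (hres _ hNm _ hAu _ h01).mpr (le_of_eq hNAu)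
  exact le_trans h2 h3
end

section
/- Let (T,I,N) be an IMTL triplet with T continuous, and let c ∈ [0,1]. If λ₁ = I(λ₂, c) and λ₁ < 1 (equivalently λ₂ > c since I is the residual implicator, interpreting c = N(R(v,u))), then also λ₂ = I(λ₁, c). That is, the adjacency relation between granules is symmetric for parameters smaller than 1. -/
/-!
Write `¬x` for `I x 0`. Residuation alone turns the involutivity of `¬` into the representation
`I x y = ¬(T x (¬y))`, hence into the contraposition law `I (¬c) (¬λ₂) = I λ₂ c = λ₁`.
If `λ₁ < 1` then `c < λ₂`, so `¬λ₂ ≤ ¬c`, and continuity of `T` (through the intermediate value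
theorem) makes `T` divisible: `T (¬c) (I (¬c) (¬λ₂)) = ¬λ₂`, i.e. `T λ₁ (¬c) = ¬λ₂`.
Applying `¬` and the representation once more gives `I λ₁ c = λ₂`.
-/

section Residuated

variable {α : Type*} {S : Set α} {T I : α → α → α} {b x y : α}

theorem tnorm_residual_le [Preorder α]
    (hImem : ∀ x ∈ S, ∀ y ∈ S, I x y ∈ S)
    (hres : ∀ x ∈ S, ∀ y ∈ S, ∀ z ∈ S, (T x y ≤ z ↔ x ≤ I y z))
    (hx : x ∈ S) (hy : y ∈ S) : T (I x y) x ≤ y :=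
  (hres _ (hImem x hx y hy) x hx y hy).2 le_rfl

theorem residual_le_residual_left [Preorder α]
    (hTmono : ∀ x ∈ S, ∀ y ∈ S, ∀ z ∈ S, y ≤ z → T x y ≤ T x z)
    (hImem : ∀ x ∈ S, ∀ y ∈ S, I x y ∈ S)
    (hres : ∀ x ∈ S, ∀ y ∈ S, ∀ z ∈ S, (T x y ≤ z ↔ x ≤ I y z))
    (hb : b ∈ S) (hx : x ∈ S) (hy : y ∈ S) (hyx : y ≤ x) : I x b ≤ I y b := by
  rw [← hres _ (hImem x hx b hb) y hy b hb]
  exact (hTmono _ (hImem x hx b hb) y hy x hx hyx).trans (tnorm_residual_le hImem hres hx hb)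

theorem residual_eq_residual_tnorm_residual [PartialOrder α]
    (hTmem : ∀ x ∈ S, ∀ y ∈ S, T x y ∈ S)
    (hTassoc : ∀ x ∈ S, ∀ y ∈ S, ∀ z ∈ S, T (T x y) z = T x (T y z))
    (hImem : ∀ x ∈ S, ∀ y ∈ S, I x y ∈ S)
    (hres : ∀ x ∈ S, ∀ y ∈ S, ∀ z ∈ S, (T x y ≤ z ↔ x ≤ I y z))
    (hb : b ∈ S) (hinv : ∀ x ∈ S, I (I x b) b = x) (hx : x ∈ S) (hy : y ∈ S) :
    I x y = I (T x (I y b)) b := by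
  have hny : I y b ∈ S := hImem y hy b hb
  have hxny : T x (I y b) ∈ S := hTmem x hx _ hny
  have key : ∀ u ∈ S, u ≤ I x y ↔ u ≤ I (T x (I y b)) b := fun u hu => by
    rw [← hres u hu x hx y hy, ← hres u hu _ hxny b hb, ← hTassoc u hu x hx _ hny,
      hres _ (hTmem u hu x hx) _ hny b hb, hinv y hy]
  exact le_antisymm ((key _ (hImem x hx y hy)).1 le_rfl)
    ((key _ (hImem _ hxny b hb)).2 le_rfl)

theorem residual_contrapose [PartialOrder α]
    (hTmem : ∀ x ∈ S, ∀ y ∈ S, T x y ∈ S)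
    (hTcomm : ∀ x ∈ S, ∀ y ∈ S, T x y = T y x)
    (hTassoc : ∀ x ∈ S, ∀ y ∈ S, ∀ z ∈ S, T (T x y) z = T x (T y z))
    (hImem : ∀ x ∈ S, ∀ y ∈ S, I x y ∈ S)
    (hres : ∀ x ∈ S, ∀ y ∈ S, ∀ z ∈ S, (T x y ≤ z ↔ x ≤ I y z))
    (hb : b ∈ S) (hinv : ∀ x ∈ S, I (I x b) b = x) (hx : x ∈ S) (hy : y ∈ S) :
    I (I y b) (I x b) = I x y := by
  have hny : I y b ∈ S := hImem y hy b hb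
  rw [residual_eq_residual_tnorm_residual hTmem hTassoc hImem hres hb hinv hny (hImem x hx b hb),
    hinv x hx, hTcomm _ hny x hx,
    ← residual_eq_residual_tnorm_residual hTmem hTassoc hImem hres hb hinv hx hy]

end Residuated

section UnitInterval

variable {T I : ℝ → ℝ → ℝ} {x y : ℝ}

theorem tnorm_le_right
    (hTcomm : ∀ x ∈ Set.Icc (0:ℝ) 1, ∀ y ∈ Set.Icc (0:ℝ) 1, T x y = T y x)
    (hTmono : ∀ x ∈ Set.Icc (0:ℝ) 1, ∀ y ∈ Set.Icc (0:ℝ) 1, ∀ z ∈ Set.Icc (0:ℝ) 1,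
      y ≤ z → T x y ≤ T x z)
    (hTone : ∀ x ∈ Set.Icc (0:ℝ) 1, T x 1 = x)
    (hx : x ∈ Set.Icc (0:ℝ) 1) (hy : y ∈ Set.Icc (0:ℝ) 1) : T x y ≤ y := by
  rw [hTcomm x hx y hy]
  simpa only [hTone y hy] using hTmono y hy x hx 1 (Set.right_mem_Icc.2 zero_le_one) hx.2

theorem lt_of_residual_lt_one
    (hTcomm : ∀ x ∈ Set.Icc (0:ℝ) 1, ∀ y ∈ Set.Icc (0:ℝ) 1, T x y = T y x)
    (hTone : ∀ x ∈ Set.Icc (0:ℝ) 1, T x 1 = x)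
    (hres : ∀ x ∈ Set.Icc (0:ℝ) 1, ∀ y ∈ Set.Icc (0:ℝ) 1, ∀ z ∈ Set.Icc (0:ℝ) 1,
      (T x y ≤ z ↔ x ≤ I y z))
    (hx : x ∈ Set.Icc (0:ℝ) 1) (hy : y ∈ Set.Icc (0:ℝ) 1) (hlt : I x y < 1) : y < x := by
  have h1 : (1:ℝ) ∈ Set.Icc (0:ℝ) 1 := Set.right_mem_Icc.2 zero_le_one
  by_contra! hxy
  have : T 1 x ≤ y := by rwa [hTcomm 1 h1 x hx, hTone x hx]
  linarith [(hres 1 h1 x hx y hy).1 this]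

theorem tnorm_residual_of_le
    (hTcomm : ∀ x ∈ Set.Icc (0:ℝ) 1, ∀ y ∈ Set.Icc (0:ℝ) 1, T x y = T y x)
    (hTmono : ∀ x ∈ Set.Icc (0:ℝ) 1, ∀ y ∈ Set.Icc (0:ℝ) 1, ∀ z ∈ Set.Icc (0:ℝ) 1,
      y ≤ z → T x y ≤ T x z)
    (hTone : ∀ x ∈ Set.Icc (0:ℝ) 1, T x 1 = x)
    (hTcont : ContinuousOn (fun p : ℝ × ℝ => T p.1 p.2)
      (Set.Icc (0:ℝ) 1 ×ˢ Set.Icc (0:ℝ) 1))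
    (hImem : ∀ x ∈ Set.Icc (0:ℝ) 1, ∀ y ∈ Set.Icc (0:ℝ) 1, I x y ∈ Set.Icc (0:ℝ) 1)
    (hres : ∀ x ∈ Set.Icc (0:ℝ) 1, ∀ y ∈ Set.Icc (0:ℝ) 1, ∀ z ∈ Set.Icc (0:ℝ) 1,
      (T x y ≤ z ↔ x ≤ I y z))
    (hx : x ∈ Set.Icc (0:ℝ) 1) (hy : y ∈ Set.Icc (0:ℝ) 1) (hyx : y ≤ x) :
    T x (I x y) = y := by
  have h0 : (0:ℝ) ∈ Set.Icc (0:ℝ) 1 := Set.left_mem_Icc.2 zero_le_one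
  have hcont : ContinuousOn (T x) (Set.Icc 0 1) :=
    hTcont.comp (continuousOn_const.prodMk continuousOn_id) fun z hz => Set.mk_mem_prod hx hz
  have hrange : y ∈ Set.Icc (T x 0) (T x 1) :=
    ⟨(tnorm_le_right hTcomm hTmono hTone hx h0).trans hy.1, (hTone x hx).symm ▸ hyx⟩
  obtain ⟨z, hz, hzy⟩ := intermediate_value_Icc zero_le_one hcont hrange
  have hz_le : z ≤ I x y := (hres z hz x hx y hy).1 (hTcomm z hz x hx ▸ hzy.le)
  refine le_antisymm ?_ ?_
  · rw [hTcomm x hx _ (hImem x hx y hy)]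
    exact tnorm_residual_le hImem hres hx hy
  · calc y = T x z := hzy.symm
      _ ≤ T x (I x y) := hTmono x hx z hz _ (hImem x hx y hy) hz_le

end UnitInterval

theorem stmt_17_general (T I : ℝ → ℝ → ℝ) (Nf : ℝ → ℝ)
    (hTmem : ∀ x ∈ Set.Icc (0:ℝ) 1, ∀ y ∈ Set.Icc (0:ℝ) 1, T x y ∈ Set.Icc (0:ℝ) 1)
    (hTcomm : ∀ x ∈ Set.Icc (0:ℝ) 1, ∀ y ∈ Set.Icc (0:ℝ) 1, T x y = T y x)
    (hTassoc : ∀ x ∈ Set.Icc (0:ℝ) 1, ∀ y ∈ Set.Icc (0:ℝ) 1, ∀ z ∈ Set.Icc (0:ℝ) 1,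
      T (T x y) z = T x (T y z))
    (hTmono : ∀ x ∈ Set.Icc (0:ℝ) 1, ∀ y ∈ Set.Icc (0:ℝ) 1, ∀ z ∈ Set.Icc (0:ℝ) 1,
      y ≤ z → T x y ≤ T x z)
    (hTone : ∀ x ∈ Set.Icc (0:ℝ) 1, T x 1 = x)
    (hTcont : ContinuousOn (fun p : ℝ × ℝ => T p.1 p.2)
      (Set.Icc (0:ℝ) 1 ×ˢ Set.Icc (0:ℝ) 1))
    (hImem : ∀ x ∈ Set.Icc (0:ℝ) 1, ∀ y ∈ Set.Icc (0:ℝ) 1, I x y ∈ Set.Icc (0:ℝ) 1)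
    (hres : ∀ x ∈ Set.Icc (0:ℝ) 1, ∀ y ∈ Set.Icc (0:ℝ) 1, ∀ z ∈ Set.Icc (0:ℝ) 1,
      (T x y ≤ z ↔ x ≤ I y z))
    (hN : ∀ x ∈ Set.Icc (0:ℝ) 1, Nf x = I x 0)
    (hinv : ∀ x ∈ Set.Icc (0:ℝ) 1, Nf (Nf x) = x)
    (lam1 lam2 c : ℝ)
    (hlam2 : lam2 ∈ Set.Icc (0:ℝ) 1)
    (hc : c ∈ Set.Icc (0:ℝ) 1)
    (hadj : lam1 = I lam2 c) (hlt : lam1 < 1) :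
    lam2 = I lam1 c := by
  subst hadj
  have h0 : (0:ℝ) ∈ Set.Icc (0:ℝ) 1 := Set.left_mem_Icc.2 zero_le_one
  have hneg : ∀ x ∈ Set.Icc (0:ℝ) 1, I (I x 0) 0 = x := fun x hx => by
    rw [← hN _ (hImem x hx 0 h0), ← hN x hx, hinv x hx]
  have hnc : I c 0 ∈ Set.Icc (0:ℝ) 1 := hImem c hc 0 h0
  have hc_lt : c < lam2 := lt_of_residual_lt_one hTcomm hTone hres hlam2 hc hlt
  have hdiv : T (I c 0) (I lam2 c) = I lam2 0 := by
    rw [← residual_contrapose hTmem hTcomm hTassoc hImem hres h0 hneg hlam2 hc]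
    exact tnorm_residual_of_le hTcomm hTmono hTone hTcont hImem hres hnc (hImem lam2 hlam2 0 h0)
      (residual_le_residual_left hTmono hImem hres h0 hlam2 hc hc_lt.le)
  calc lam2 = I (I lam2 0) 0 := (hneg lam2 hlam2).symm
    _ = I (T (I lam2 c) (I c 0)) 0 := by rw [hTcomm _ (hImem lam2 hlam2 c hc) _ hnc, hdiv]
    _ = I (I lam2 c) c :=
      (residual_eq_residual_tnorm_residual hTmem hTassoc hImem hres h0 hneg
        (hImem lam2 hlam2 c hc) hc).symm

/-- Symmetry of the adjacency relation for parameters smaller than 1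
    (continuous IMTL t-norm). -/
theorem stmt_17 (T I : ℝ → ℝ → ℝ) (Nf : ℝ → ℝ)
    (hTmem : ∀ x ∈ Set.Icc (0:ℝ) 1, ∀ y ∈ Set.Icc (0:ℝ) 1, T x y ∈ Set.Icc (0:ℝ) 1)
    (hTcomm : ∀ x ∈ Set.Icc (0:ℝ) 1, ∀ y ∈ Set.Icc (0:ℝ) 1, T x y = T y x)
    (hTassoc : ∀ x ∈ Set.Icc (0:ℝ) 1, ∀ y ∈ Set.Icc (0:ℝ) 1, ∀ z ∈ Set.Icc (0:ℝ) 1,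
      T (T x y) z = T x (T y z))
    (hTmono : ∀ x ∈ Set.Icc (0:ℝ) 1, ∀ y ∈ Set.Icc (0:ℝ) 1, ∀ z ∈ Set.Icc (0:ℝ) 1,
      y ≤ z → T x y ≤ T x z)
    (hTone : ∀ x ∈ Set.Icc (0:ℝ) 1, T x 1 = x)
    (hTcont : ContinuousOn (fun p : ℝ × ℝ => T p.1 p.2)
      (Set.Icc (0:ℝ) 1 ×ˢ Set.Icc (0:ℝ) 1))
    (hImem : ∀ x ∈ Set.Icc (0:ℝ) 1, ∀ y ∈ Set.Icc (0:ℝ) 1, I x y ∈ Set.Icc (0:ℝ) 1)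
    (hres : ∀ x ∈ Set.Icc (0:ℝ) 1, ∀ y ∈ Set.Icc (0:ℝ) 1, ∀ z ∈ Set.Icc (0:ℝ) 1,
      (T x y ≤ z ↔ x ≤ I y z))
    (hN : ∀ x ∈ Set.Icc (0:ℝ) 1, Nf x = I x 0)
    (hinv : ∀ x ∈ Set.Icc (0:ℝ) 1, Nf (Nf x) = x)
    (lam1 lam2 c : ℝ)
    (hlam1 : lam1 ∈ Set.Icc (0:ℝ) 1) (hlam2 : lam2 ∈ Set.Icc (0:ℝ) 1)
    (hc : c ∈ Set.Icc (0:ℝ) 1)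
    (hadj : lam1 = I lam2 c) (hlt : lam1 < 1) :
    lam2 = I lam1 c :=
  stmt_17_general T I Nf hTmem hTcomm hTassoc hTmono hTone hTcont hImem hres hN hinv lam1 lam2 c
    hlam2 hc hadj hlt
end

section
/- Let T be a left-continuous t-norm, I its residual implicator, and M: U×U→[0,1] a symmetric map on a finite ordered set U = {u₁,…,uₙ}. Define β_{u₁} ∈ [0,1] arbitrarily, and for 1 < i ≤ n set β_{uᵢ} = min{ I(β_{uⱼ}, M(uⱼ,uᵢ)) : j < i }. Then T(β_{uᵢ}, β_{uₖ}) ≤ M(uᵢ,uₖ) for all i ≠ k; that is, the multi-class granular approximation problem always has a feasible solution. -/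
/-- Feasibility of the multi-class granular approximation problem: the greedy
    construction β_{u₁} arbitrary, β_{uᵢ} = min_{j<i} I(β_{uⱼ}, M(uⱼ,uᵢ))
    satisfies all disjointness constraints. -/
theorem stmt_19 (n : ℕ)
    (T I : ℝ → ℝ → ℝ)
    (hTmem : ∀ x ∈ Set.Icc (0:ℝ) 1, ∀ y ∈ Set.Icc (0:ℝ) 1, T x y ∈ Set.Icc (0:ℝ) 1)
    (hTcomm : ∀ x ∈ Set.Icc (0:ℝ) 1, ∀ y ∈ Set.Icc (0:ℝ) 1, T x y = T y x)
    (hTassoc : ∀ x ∈ Set.Icc (0:ℝ) 1, ∀ y ∈ Set.Icc (0:ℝ) 1, ∀ z ∈ Set.Icc (0:ℝ) 1,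
      T (T x y) z = T x (T y z))
    (hTmono : ∀ x ∈ Set.Icc (0:ℝ) 1, ∀ y ∈ Set.Icc (0:ℝ) 1, ∀ z ∈ Set.Icc (0:ℝ) 1,
      y ≤ z → T x y ≤ T x z)
    (hTone : ∀ x ∈ Set.Icc (0:ℝ) 1, T x 1 = x)
    (hImem : ∀ x ∈ Set.Icc (0:ℝ) 1, ∀ y ∈ Set.Icc (0:ℝ) 1, I x y ∈ Set.Icc (0:ℝ) 1)
    (hres : ∀ x ∈ Set.Icc (0:ℝ) 1, ∀ y ∈ Set.Icc (0:ℝ) 1, ∀ z ∈ Set.Icc (0:ℝ) 1,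
      (T x y ≤ z ↔ x ≤ I y z))
    (M : Fin n → Fin n → ℝ)
    (hMmem : ∀ i j : Fin n, M i j ∈ Set.Icc (0:ℝ) 1)
    (hMsymm : ∀ i j : Fin n, M i j = M j i)
    (β : Fin n → ℝ)
    (hβmem : ∀ i : Fin n, β i ∈ Set.Icc (0:ℝ) 1)
    (hβ : ∀ i : Fin n, 0 < (i : ℕ) →
      β i = sInf {x | ∃ j : Fin n, j < i ∧ x = I (β j) (M j i)}) :
    ∀ i k : Fin n, i ≠ k → T (β i) (β k) ≤ M i k := by
  have key : ∀ i j : Fin n, j < i → T (β i) (β j) ≤ M j i := by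
    intro i j hji
    have hle : β i ≤ I (β j) (M j i) := by
      rw [hβ i ((Nat.zero_le _).trans_lt hji)]
      apply csInf_le
      · exact ⟨0, fun x ⟨j', _, hx⟩ => hx ▸ (hImem _ (hβmem j') _ (hMmem j' i)).1⟩
      · exact ⟨j, hji, rfl⟩
    exact (hres _ (hβmem i) _ (hβmem j) _ (hMmem j i)).mpr hle
  intro i k hne
  rcases hne.lt_or_gt with h | h
  · have := key k i h
    rw [hTcomm _ (hβmem i) _ (hβmem k)]
    exact this
  · exact (key i k h).trans_eq (hMsymm k i)
end
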